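/- Let ρ1 be a positive definite Hermitian D×D complex matrix and ρ0 a positive semidefinite D×D complex matrix, and let M = ρ1^{-1/2} √(ρ1^{1/2} ρ0 ρ1^{1/2}) ρ1^{-1/2}. Then (i) M satisfies the matrix quadratic equation M ρ1 M = ρ0, and (ii) for every eigenvector v of M with eigenvalue m (so M v = m v), one has m² · ⟨v, ρ1 v⟩ = ⟨v, ρ0 v⟩; i.e., the squared eigenvalues of M are ratios of the measured probabilities tr(ρ0 E_b)/tr(ρ1 E_b) for the projectors E_b onto its eigenvectors. -/

import Mathlib

/-!
Write `S = ρ1^{1/2}` and `T = √(S ρ0 S)`, so that `M = S⁻¹ T S⁻¹`. Then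
`M ρ1 M = S⁻¹ T S⁻¹ S S S⁻¹ T S⁻¹ = S⁻¹ T² S⁻¹ = ρ0`. Since `S` and `T` are Hermitian,
so is `M`; hence an eigenvalue `m` of `M` is real and
`⟨v, ρ0 v⟩ = ⟨v, M ρ1 M v⟩ = ⟨M v, ρ1 M v⟩ = m² ⟨v, ρ1 v⟩`.
-/

open Matrix
open scoped ComplexOrder

/-- Mathlib's former `Matrix.PosSemidef.sqrt`, defined through the spectral theorem. -/
noncomputable def Matrix.PosSemidef.sqrt {n : Type*} {𝕜 : Type*} [Fintype n] [DecidableEq n]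
    [RCLike 𝕜] {A : Matrix n n 𝕜} (hA : A.PosSemidef) : Matrix n n 𝕜 :=
  hA.1.eigenvectorUnitary.1 * diagonal ((↑) ∘ (fun i => (hA.1.eigenvalues i).sqrt)) *
    (star hA.1.eigenvectorUnitary : Matrix n n 𝕜)

theorem Matrix.PosSemidef.posSemidef_sqrt {n : Type*} {𝕜 : Type*} [Fintype n] [DecidableEq n]
    [RCLike 𝕜] {A : Matrix n n 𝕜} (hA : A.PosSemidef) : hA.sqrt.PosSemidef := by
  have hd : (diagonal ((↑) ∘ (fun i => (hA.1.eigenvalues i).sqrt)) : Matrix n n 𝕜).PosSemidef :=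
    posSemidef_diagonal_iff.mpr (fun i => by
      simp only [Function.comp_apply]
      exact_mod_cast Real.sqrt_nonneg _)
  have h := hd.mul_mul_conjTranspose_same (hA.1.eigenvectorUnitary : Matrix n n 𝕜)
  unfold Matrix.PosSemidef.sqrt
  convert h using 1
  first
    | rfl
    | simp [Matrix.star_eq_conjTranspose]

noncomputable def sandwichPosSemidef {D : ℕ} {ρ0 ρ1 : Matrix (Fin D) (Fin D) ℂ}
    (hρ0 : ρ0.PosSemidef) (hρ1 : ρ1.PosSemidef) :
    (hρ1.sqrt * ρ0 * hρ1.sqrt).PosSemidef := by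
  have h := hρ0.mul_mul_conjTranspose_same hρ1.sqrt
  rwa [hρ1.posSemidef_sqrt.isHermitian.eq] at h

/-- The operator `M = ρ1^{-1/2} √(ρ1^{1/2} ρ0 ρ1^{1/2}) ρ1^{-1/2}`. -/
noncomputable def Mop {D : ℕ} {ρ0 ρ1 : Matrix (Fin D) (Fin D) ℂ}
    (hρ0 : ρ0.PosSemidef) (hρ1 : ρ1.PosSemidef) : Matrix (Fin D) (Fin D) ℂ :=
  hρ1.sqrt⁻¹ * (sandwichPosSemidef hρ0 hρ1).sqrt * hρ1.sqrt⁻¹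

namespace Matrix

variable {n 𝕜 : Type*} [Fintype n] [RCLike 𝕜]

section Inverse

variable [DecidableEq n]

theorem PosSemidef.sqrt_mul_self {A : Matrix n n 𝕜} (hA : A.PosSemidef) :
    hA.sqrt * hA.sqrt = A := by
  have hdiag : (diagonal ((↑) ∘ fun i => (hA.1.eigenvalues i).sqrt) : Matrix n n 𝕜) *
      diagonal ((↑) ∘ fun i => (hA.1.eigenvalues i).sqrt) =
      diagonal (RCLike.ofReal ∘ hA.1.eigenvalues) := by
    rw [diagonal_mul_diagonal]
    congr 1
    funext i
    simp only [Function.comp_apply]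
    rw [← RCLike.ofReal_mul, Real.mul_self_sqrt (hA.eigenvalues_nonneg i)]
  have hunitary : (star hA.1.eigenvectorUnitary : Matrix n n 𝕜) * hA.1.eigenvectorUnitary = 1 :=
    Unitary.coe_star_mul_self _
  conv_rhs => rw [hA.1.spectral_theorem, Unitary.conjStarAlgAut_apply]
  rw [← hdiag]
  simp only [PosSemidef.sqrt, Matrix.mul_assoc]
  rw [← Matrix.mul_assoc (star _ : Matrix n n 𝕜) _ (_ * _), hunitary, Matrix.one_mul]

theorem PosDef.isUnit_det_sqrt {A : Matrix n n 𝕜} (hA : A.PosDef) :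
    IsUnit hA.posSemidef.sqrt.det := by
  refine isUnit_iff_ne_zero.mpr fun h => hA.det_pos.ne' ?_
  rw [← hA.posSemidef.sqrt_mul_self, det_mul, h, zero_mul]

theorem nonsing_inv_mul_mul_nonsing_inv_quadratic {R : Type*} [CommRing R]
    {S T A B : Matrix n n R} (hS : IsUnit S.det) (hA : S * S = A) (hT : T * T = S * B * S) :
    S⁻¹ * T * S⁻¹ * A * (S⁻¹ * T * S⁻¹) = B := by
  calc S⁻¹ * T * S⁻¹ * A * (S⁻¹ * T * S⁻¹)
      = S⁻¹ * (T * (S⁻¹ * (S * (S * (S⁻¹ * (T * S⁻¹)))))) := by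
        simp only [← hA, Matrix.mul_assoc]
    _ = S⁻¹ * (T * T) * S⁻¹ := by
        rw [nonsing_inv_mul_cancel_left _ _ hS, mul_nonsing_inv_cancel_left _ _ hS]
        simp only [Matrix.mul_assoc]
    _ = B := by
        rw [hT, Matrix.mul_assoc, Matrix.mul_assoc, mul_nonsing_inv _ hS, Matrix.mul_one,
          nonsing_inv_mul_cancel_left _ _ hS]

theorem IsHermitian.nonsing_inv_mul_mul_nonsing_inv {α : Type*} [CommRing α]
    [StarRing α] {S T : Matrix n n α} (hS : S.IsHermitian) (hT : T.IsHermitian) :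
    (S⁻¹ * T * S⁻¹).IsHermitian := by
  simpa only [Matrix.mul_assoc, hS.inv.eq] using isHermitian_conjTranspose_mul_mul S⁻¹ hT

end Inverse

variable {M : Matrix n n 𝕜} {v : n → 𝕜} {m : 𝕜}

theorem IsHermitian.star_dotProduct_mulVec (hM : M.IsHermitian) (v w : n → 𝕜) :
    star v ⬝ᵥ M *ᵥ w = star (M *ᵥ v) ⬝ᵥ w := by
  rw [dotProduct_mulVec, star_mulVec, hM.eq]

theorem IsHermitian.star_eigenvalue_eq_self (hM : M.IsHermitian) (hv : M *ᵥ v = m • v)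
    (hv0 : v ≠ 0) : star m = m := by
  have h := hM.star_dotProduct_mulVec v v
  rw [hv, star_smul, dotProduct_smul, smul_dotProduct, smul_eq_mul, smul_eq_mul] at h
  exact (mul_right_cancel₀ (fun h0 => hv0 (dotProduct_star_self_eq_zero.mp h0)) h).symm

theorem IsHermitian.sq_mul_dotProduct_eq_of_mul_mul_eq {A B : Matrix n n 𝕜} (hM : M.IsHermitian)
    (hMAM : M * A * M = B) (hv : M *ᵥ v = m • v) :
    m ^ 2 * (star v ⬝ᵥ A *ᵥ v) = star v ⬝ᵥ B *ᵥ v := by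
  rcases eq_or_ne v 0 with rfl | hv0
  · simp
  calc m ^ 2 * (star v ⬝ᵥ A *ᵥ v) = star (m • v) ⬝ᵥ A *ᵥ (m • v) := by
        rw [star_smul, mulVec_smul, dotProduct_smul, smul_dotProduct,
          hM.star_eigenvalue_eq_self hv hv0, smul_eq_mul, smul_eq_mul]
        ring
    _ = star v ⬝ᵥ B *ᵥ v := by
        rw [← hv, ← hM.star_dotProduct_mulVec, ← hMAM, ← mulVec_mulVec, ← mulVec_mulVec]

end Matrix

/-- The operator `M = ρ1^{-1/2} √(ρ1^{1/2} ρ0 ρ1^{1/2}) ρ1^{-1/2}` satisfies the matrix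
quadratic equation `M ρ1 M = ρ0`, and its squared eigenvalues are the ratios of the
quadratic forms of `ρ0` and `ρ1` on its eigenvectors. -/
theorem Mop_quadratic_and_eigenvalues {D : ℕ} (ρ0 ρ1 : Matrix (Fin D) (Fin D) ℂ)
    (hρ0 : ρ0.PosSemidef) (hρ1 : ρ1.PosDef) :
    Mop hρ0 hρ1.posSemidef * ρ1 * Mop hρ0 hρ1.posSemidef = ρ0 ∧
    ∀ (v : Fin D → ℂ) (m : ℂ), Mop hρ0 hρ1.posSemidef *ᵥ v = m • v →
      m ^ 2 * (star v ⬝ᵥ ρ1 *ᵥ v) = star v ⬝ᵥ ρ0 *ᵥ v := by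
  have hquad : Mop hρ0 hρ1.posSemidef * ρ1 * Mop hρ0 hρ1.posSemidef = ρ0 :=
    nonsing_inv_mul_mul_nonsing_inv_quadratic hρ1.isUnit_det_sqrt hρ1.posSemidef.sqrt_mul_self
      (sandwichPosSemidef hρ0 hρ1.posSemidef).sqrt_mul_self
  have hherm : (Mop hρ0 hρ1.posSemidef).IsHermitian :=
    hρ1.posSemidef.posSemidef_sqrt.isHermitian.nonsing_inv_mul_mul_nonsing_inv
      (sandwichPosSemidef hρ0 hρ1.posSemidef).posSemidef_sqrt.isHermitian
  exact ⟨hquad, fun v m hv => hherm.sq_mul_dotProduct_eq_of_mul_mul_eq hquad hv⟩
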